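/- arXiv:1506.00149 — 10 statements merged into one kernel-verified Lean document; each statement's English description precedes it below -/
import Mathlib

section
/- For every k ∈ ℕ and a ∈ ℤ, if lcm(1, 2, ..., k) divides a, then the function x ↦ a · C(x, k) from ℕ to ℤ is congruence preserving, i.e. for all x, y ∈ ℕ, x - y divides a·C(x,k) - a·C(y,k). -/
def lcmUpTo (k : ℕ) : ℕ := (Finset.Icc 1 k).lcm id

/-!
By Vandermonde, `C(y + n, k) - C(y, k) = ∑_{1 ≤ i ≤ k} C(n, i) C(y, k - i)`,
and for `1 ≤ i ≤ k` the identity `i C(n, i) = n C(n - 1, i - 1)` shows that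
`n ∣ lcm(1, …, k) C(n, i)`.
Hence `n ∣ lcm(1, …, k) (C(y + n, k) - C(y, k))`, and multiples of `lcm(1, …, k) C(·, k)`
inherit the property.
-/

def CongruencePreserving (f : ℕ → ℤ) : Prop :=
  ∀ x y : ℕ, (x : ℤ) - y ∣ f x - f y

namespace CongruencePreserving

theorem of_dvd_sub_add {f : ℕ → ℤ} (hf : ∀ y n : ℕ, (n : ℤ) ∣ f (y + n) - f y) :
    CongruencePreserving f := by
  intro x y
  rcases le_total y x with hyx | hxy
  · obtain ⟨n, rfl⟩ := Nat.exists_eq_add_of_le hyx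
    simpa using hf y n
  · obtain ⟨n, rfl⟩ := Nat.exists_eq_add_of_le hxy
    rw [Nat.cast_add, sub_add_cancel_left, neg_dvd, dvd_sub_comm]
    exact hf x n

theorem mul_of_dvd {f : ℕ → ℤ} {a b : ℤ} (hf : CongruencePreserving fun x => b * f x)
    (hab : b ∣ a) : CongruencePreserving fun x => a * f x := by
  obtain ⟨c, rfl⟩ := hab
  intro x y
  simpa only [sub_mul, mul_right_comm b] using (hf x y).mul_right c

end CongruencePreserving

theorem Nat.dvd_mul_choose {n i m : ℕ} (hi : 0 < i) (him : i ∣ m) : n ∣ m * n.choose i := by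
  obtain ⟨i, rfl⟩ := Nat.exists_eq_add_of_le' hi
  obtain ⟨c, rfl⟩ := him
  rcases n with _ | n
  · simp
  refine ⟨c * n.choose i, ?_⟩
  rw [mul_comm (i + 1) c, mul_assoc, mul_comm (i + 1), ← Nat.add_one_mul_choose_eq]
  ring

theorem succ_dvd_lcmUpTo {i k : ℕ} (h : i < k) : i + 1 ∣ lcmUpTo k :=
  Finset.dvd_lcm (Finset.mem_Icc.mpr ⟨by omega, h⟩)

theorem choose_add_eq_add_sum (n y k : ℕ) :
    (y + n).choose k =
      y.choose k + ∑ i ∈ Finset.range k, n.choose (i + 1) * y.choose (k - (i + 1)) := by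
  rw [add_comm y, Nat.add_choose_eq, Finset.Nat.sum_antidiagonal_eq_sum_range_succ_mk,
    Finset.sum_range_succ', add_comm]
  simp

theorem congruencePreserving_lcmUpTo_mul_choose (k : ℕ) :
    CongruencePreserving fun x => (lcmUpTo k : ℤ) * x.choose k := by
  refine CongruencePreserving.of_dvd_sub_add fun y n => ?_
  have hdvd :
      n ∣ lcmUpTo k * ∑ i ∈ Finset.range k, n.choose (i + 1) * y.choose (k - (i + 1)) := by
    rw [Finset.mul_sum]
    refine Finset.dvd_sum fun i hi => ?_
    rw [← mul_assoc]
    exact (Nat.dvd_mul_choose i.succ_pos (succ_dvd_lcmUpTo (Finset.mem_range.mp hi))).mul_right _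
  rw [choose_add_eq_add_sum, Nat.cast_add, mul_add, add_sub_cancel_left]
  exact_mod_cast hdvd

theorem stmt_4 (k : ℕ) (a : ℤ) (h : (lcmUpTo k : ℤ) ∣ a) (x y : ℕ) :
    (x : ℤ) - y ∣ a * (x.choose k) - a * (y.choose k) :=
  (congruencePreserving_lcmUpTo_mul_choose k).mul_of_dvd h x y
end

section
/- Let m divide n, m ≥ 2, and let P_k^{n,m} : ℤ/nℤ → ℤ/mℤ send x to (C(ι_n(x), k) mod m) where ι_n(x) ∈ {0,...,n-1} is the representative of x. If lcm(1,...,k) divides a_k ∈ ℤ, then the function x ↦ (a_k mod m) · P_k^{n,m}(x) is congruence preserving, i.e. for all x, y ∈ ℤ/nℤ, π_{n,m}(x - y) divides its difference at x and y. -/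
/-!
Vandermonde's identity gives `C(v + c, k) - C(v, k) = ∑_{1 ≤ j ≤ k} C(c, j) C(v, k - j)`, and
`c ∣ j C(c, j)` with `j ∣ lcm(1, ..., k)` for every such `j`. Hence `u - v` divides
`lcm(1, ..., k) (C(u, k) - C(v, k))` in `ℤ` for all naturals `u, v`; applied to the
representatives `u = ι_n(x)`, `v = ι_n(y)` and reduced mod `m`, this is the claim.
-/

open Finset

lemma dvd_lcmUpTo {j k : ℕ} (hj : 1 ≤ j) (hjk : j ≤ k) : j ∣ lcmUpTo k :=
  Finset.dvd_lcm (mem_Icc.2 ⟨hj, hjk⟩)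

lemma dvd_add_one_mul_choose_add_one (c i : ℕ) : c ∣ (i + 1) * c.choose (i + 1) := by
  rcases c with _ | c
  · simp
  · rw [mul_comm, ← Nat.add_one_mul_choose_eq]
    exact dvd_mul_right _ _

lemma dvd_lcmUpTo_mul_choose_add_one (c : ℕ) {i k : ℕ} (hik : i < k) :
    c ∣ lcmUpTo k * c.choose (i + 1) :=
  (dvd_add_one_mul_choose_add_one c i).trans
    (mul_dvd_mul_right (dvd_lcmUpTo (Nat.le_add_left 1 i) hik) _)

lemma add_choose_sub_choose (c v k : ℕ) :
    ((c + v).choose k : ℤ) - v.choose k =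
      ∑ i ∈ range k, (c.choose (i + 1) * v.choose (k - (i + 1)) : ℤ) := by
  rw [Nat.add_choose_eq,
    Nat.sum_antidiagonal_eq_sum_range_succ (fun i j => c.choose i * v.choose j), sum_range_succ']
  push_cast
  simp

lemma natCast_dvd_lcmUpTo_mul_add_choose_sub_choose (c v k : ℕ) :
    (c : ℤ) ∣ lcmUpTo k * (((c + v).choose k : ℤ) - v.choose k) := by
  rw [add_choose_sub_choose, mul_sum]
  refine dvd_sum fun i hi => ?_
  rw [← mul_assoc]
  exact dvd_mul_of_dvd_left
    (by exact_mod_cast dvd_lcmUpTo_mul_choose_add_one c (mem_range.1 hi)) _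

lemma sub_dvd_lcmUpTo_mul_choose_sub_choose (u v k : ℕ) :
    ((u : ℤ) - v) ∣ lcmUpTo k * ((u.choose k : ℤ) - v.choose k) := by
  wlog h : v ≤ u generalizing u v
  · rw [← neg_dvd, ← dvd_neg, neg_sub, ← mul_neg, neg_sub]
    exact this v u (by omega)
  obtain ⟨c, rfl⟩ := Nat.exists_eq_add_of_le' h
  simpa using natCast_dvd_lcmUpTo_mul_add_choose_sub_choose c v k

lemma sub_dvd_mul_choose_sub_mul_choose {R : Type*} [CommRing R] (u v k : ℕ) {a : ℤ}
    (ha : (lcmUpTo k : ℤ) ∣ a) :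
    ((u : R) - v) ∣ (a : R) * u.choose k - a * v.choose k := by
  obtain ⟨b, rfl⟩ := ha
  have hdvd := map_dvd (Int.castRingHom R)
    ((sub_dvd_lcmUpTo_mul_choose_sub_choose u v k).mul_right b)
  rw [eq_intCast, eq_intCast] at hdvd
  convert hdvd using 1 <;> push_cast <;> ring

theorem stmt_5_general (n m : ℕ) (hn : 0 < n) (hmn : m ∣ n) (k : ℕ) (a : ℤ)
    (h : (lcmUpTo k : ℤ) ∣ a) (x y : ZMod n) :
    ZMod.castHom hmn (ZMod m) (x - y) ∣
      (a : ZMod m) * ((x.val.choose k : ℕ) : ZMod m)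
        - (a : ZMod m) * ((y.val.choose k : ℕ) : ZMod m) := by
  have : NeZero n := ⟨hn.ne'⟩
  rw [map_sub, ZMod.castHom_apply, ZMod.castHom_apply, ZMod.cast_eq_val, ZMod.cast_eq_val]
  exact sub_dvd_mul_choose_sub_mul_choose x.val y.val k h

theorem stmt_5 (n m : ℕ) (hn : 0 < n) (hm : 2 ≤ m) (hmn : m ∣ n) (k : ℕ) (a : ℤ)
    (h : (lcmUpTo k : ℤ) ∣ a) (x y : ZMod n) :
    ZMod.castHom hmn (ZMod m) (x - y) ∣
      (a : ZMod m) * ((x.val.choose k : ℕ) : ZMod m)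
        - (a : ZMod m) * ((y.val.choose k : ℕ) : ZMod m) :=
  stmt_5_general n m hn hmn k a h x y
end

section
/- Suppose m divides n and s, and n, s both divide r. If f : ℤ/nℤ → ℤ/mℤ is congruence preserving, then there exists a congruence preserving g : ℤ/rℤ → ℤ/sℤ such that π_{s,m} ∘ g = f ∘ π_{r,n}. -/
/-!
Lift `f` to `F : ℤ → ℤ`; the hypothesis on `f` becomes `gcd(m, X - Y) ∣ F X - F Y`, and it
suffices to find `G : ℤ → ℤ` with `X - Y ∣ G X - G Y` and `G ≡ F [ZMOD m]`, then to reduce it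
modulo `s`. Such a `G` is built one point at a time along an enumeration of `ℤ`: a value `z` at a
new point `t` must satisfy `z ≡ F t [ZMOD m]` and `z ≡ G x [ZMOD t - x]` for every point `x`
already placed. This system is pairwise compatible, so the Chinese remainder theorem for
non-coprime moduli solves it.
-/

theorem Nat.gcd_lcm_dvd_lcm_gcd (a b c : ℕ) :
    Nat.gcd (Nat.lcm a b) c ∣ Nat.lcm (Nat.gcd a c) (Nat.gcd b c) := by
  rcases eq_or_ne a 0 with rfl | ha
  · simpa using Nat.dvd_lcm_left _ _
  rcases eq_or_ne b 0 with rfl | hb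
  · simpa using Nat.dvd_lcm_right _ _
  rcases eq_or_ne c 0 with rfl | hc
  · simp
  have hac : Nat.gcd a c ≠ 0 := Nat.gcd_ne_zero_left ha
  have hbc : Nat.gcd b c ≠ 0 := Nat.gcd_ne_zero_left hb
  rw [← Nat.factorization_le_iff_dvd (Nat.gcd_ne_zero_right hc) (Nat.lcm_ne_zero hac hbc)]
  intro p
  rw [Nat.factorization_gcd (Nat.lcm_ne_zero ha hb) hc, Nat.factorization_lcm hac hbc,
    Nat.factorization_lcm ha hb, Nat.factorization_gcd ha hc, Nat.factorization_gcd hb hc]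
  simp only [Finsupp.inf_apply, Finsupp.sup_apply]
  omega

theorem Nat.gcd_finset_lcm_dvd {ι : Type*} (s : Finset ι) (n : ι → ℕ) (c : ℕ) :
    Nat.gcd (s.lcm n) c ∣ s.lcm fun i => Nat.gcd (n i) c := by
  classical
  induction s using Finset.induction_on with
  | empty => simp
  | insert i s _ ih =>
    rw [Finset.lcm_insert, Finset.lcm_insert]
    exact (Nat.gcd_lcm_dvd_lcm_gcd _ _ _).trans (lcm_dvd_lcm dvd_rfl ih)

theorem Int.exists_dvd_sub_and_dvd_sub {p q : ℕ} {a b : ℤ} (h : (Nat.gcd p q : ℤ) ∣ a - b) :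
    ∃ z, (p : ℤ) ∣ z - a ∧ (q : ℤ) ∣ z - b := by
  obtain ⟨c, hc⟩ := h
  rw [Nat.gcd_eq_gcd_ab] at hc
  exact ⟨a - p * Nat.gcdA p q * c, ⟨-(Nat.gcdA p q * c), by ring⟩,
    ⟨Nat.gcdB p q * c, by linear_combination hc⟩⟩

theorem Int.exists_forall_dvd_sub {ι : Type*} [DecidableEq ι] (s : Finset ι) (n : ι → ℕ)
    (a : ι → ℤ) (h : ∀ i ∈ s, ∀ j ∈ s, (Nat.gcd (n i) (n j) : ℤ) ∣ a i - a j) :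
    ∃ z, ∀ i ∈ s, (n i : ℤ) ∣ z - a i := by
  induction s using Finset.induction_on with
  | empty => simp
  | insert j s _ ih =>
    obtain ⟨z, hz⟩ := ih fun i hi k hk =>
      h i (Finset.mem_insert_of_mem hi) k (Finset.mem_insert_of_mem hk)
    have hgcd : (Nat.gcd (s.lcm n) (n j) : ℤ) ∣ z - a j := by
      refine Int.natCast_dvd.mpr ((Nat.gcd_finset_lcm_dvd s n (n j)).trans
        (Finset.lcm_dvd fun i hi => Int.natCast_dvd.mp ?_))
      have := dvd_add ((Int.natCast_dvd_natCast.mpr (Nat.gcd_dvd_left _ _)).trans (hz i hi))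
        (h i (Finset.mem_insert_of_mem hi) j (Finset.mem_insert_self j s))
      simpa using this
    obtain ⟨z', hz'L, hz'j⟩ := Int.exists_dvd_sub_and_dvd_sub hgcd
    refine ⟨z', fun i hi => ?_⟩
    rcases Finset.mem_insert.mp hi with rfl | hi
    · exact hz'j
    · have := dvd_add ((Int.natCast_dvd_natCast.mpr (Finset.dvd_lcm hi)).trans hz'L) (hz i hi)
      simpa using this

theorem exists_forall_rel_of_extend {α β : Type*} [Denumerable α] [Nonempty β]
    (R : α → β → α → β → Prop)
    (hext : ∀ (s : Finset α) (g : α → β) (t : α), (∀ x ∈ s, ∀ y ∈ s, R x (g x) y (g y)) →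
      ∃ v, R t v t v ∧ ∀ x ∈ s, R x (g x) t v ∧ R t v x (g x)) :
    ∃ g : α → β, ∀ x y, R x (g x) y (g y) := by
  classical
  choose! next hnext using hext
  let e : ℕ → α := Denumerable.ofNat α
  have he : e.Injective := (Denumerable.eqv α).symm.injective
  let T : ℕ → Finset α := fun N => (Finset.range N).image e
  let G : ℕ → α → β := fun N => N.rec (fun _ => Classical.arbitrary β)
    fun k g => Function.update g (e k) (next (T k) g (e k))
  have hT : ∀ N, T (N + 1) = insert (e N) (T N) := fun N => by
    simp only [T, Finset.range_add_one, Finset.image_insert]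
  have hGT : ∀ N, ∀ x ∈ T N, G (N + 1) x = G N x := fun N x hx => by
    refine Function.update_of_ne ?_ _ _
    rintro rfl
    obtain ⟨k, hk, hkN⟩ := Finset.mem_image.mp hx
    exact (Finset.mem_range.mp hk).ne (he hkN)
  have stable : ∀ k N, k < N → G N (e k) = G (k + 1) (e k) := by
    intro k N hkN
    induction N, hkN using Nat.le_induction with
    | base => rfl
    | succ N hkN ih =>
      rw [hGT N _ (Finset.mem_image_of_mem e (Finset.mem_range.mpr hkN)), ih]
  have good : ∀ N, ∀ x ∈ T N, ∀ y ∈ T N, R x (G N x) y (G N y) := by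
    intro N
    induction N with
    | zero => simp [T]
    | succ N ih =>
      obtain ⟨hnew, hold⟩ := hnext (T N) (G N) (e N) ih
      have hGe : G (N + 1) (e N) = next (T N) (G N) (e N) := Function.update_self _ _ _
      intro x hx y hy
      rw [hT] at hx hy
      rcases Finset.mem_insert.mp hx with rfl | hx <;> rcases Finset.mem_insert.mp hy with rfl | hy
      · rw [hGe]; exact hnew
      · rw [hGe, hGT N y hy]; exact (hold y hy).2
      · rw [hGe, hGT N x hx]; exact (hold x hx).1
      · rw [hGT N x hx, hGT N y hy]; exact ih x hx y hy
  refine ⟨fun x => G (Encodable.encode x + 1) x, fun x y => ?_⟩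
  set N := max (Encodable.encode x) (Encodable.encode y) + 1
  have hmem : ∀ z, Encodable.encode z < N → z ∈ T N ∧ G N z = G (Encodable.encode z + 1) z :=
    fun z hz => by
      have hzT := Finset.mem_image_of_mem e (Finset.mem_range.mpr hz)
      have hzG := stable _ _ hz
      simp only [e, Denumerable.ofNat_encode] at hzT hzG
      exact ⟨hzT, hzG⟩
  obtain ⟨hxT, hxG⟩ := hmem x (by omega)
  obtain ⟨hyT, hyG⟩ := hmem y (by omega)
  simpa only [hxG, hyG] using good N x hxT y hyT

theorem Int.exists_extend_congruencePreserving {m : ℕ} {F : ℤ → ℤ}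
    (hF : ∀ X Y, (Int.gcd m (X - Y) : ℤ) ∣ F X - F Y) (s : Finset ℤ) (g : ℤ → ℤ)
    (hgF : ∀ x ∈ s, (m : ℤ) ∣ g x - F x) (hg : ∀ x ∈ s, ∀ y ∈ s, x - y ∣ g x - g y) (t : ℤ) :
    ∃ z, (m : ℤ) ∣ z - F t ∧ ∀ x ∈ s, t - x ∣ z - g x := by
  let n : Option ℤ → ℕ := fun o => o.elim m fun x => (t - x).natAbs
  let a : Option ℤ → ℤ := fun o => o.elim (F t) g
  have hFg : ∀ x ∈ s, (Nat.gcd m (t - x).natAbs : ℤ) ∣ F t - g x := fun x hx => by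
    have := dvd_sub (hF t x)
      ((Int.natCast_dvd_natCast.mpr (Nat.gcd_dvd_left _ _)).trans (hgF x hx))
    rwa [sub_sub_sub_cancel_right] at this
  have compat :
      ∀ i ∈ s.insertNone, ∀ j ∈ s.insertNone, (Nat.gcd (n i) (n j) : ℤ) ∣ a i - a j := by
    rintro (_ | x) hx (_ | y) hy <;> simp only [Finset.some_mem_insertNone,
      Option.elim, n, a] at hx hy ⊢
    · simp
    · exact hFg y hy
    · rw [Nat.gcd_comm, dvd_sub_comm]; exact hFg x hx
    · refine dvd_trans ?_ (hg x hx y hy)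
      have := dvd_sub (Int.natCast_dvd.mpr (Nat.gcd_dvd_right _ _))
        (Int.natCast_dvd.mpr (Nat.gcd_dvd_left (t - x).natAbs (t - y).natAbs))
      simpa using this
  obtain ⟨z, hz⟩ := Int.exists_forall_dvd_sub s.insertNone n a compat
  exact ⟨z, hz none (by simp), fun x hx => Int.natAbs_dvd.mp (hz (some x) (by simpa))⟩

theorem Int.exists_congruencePreserving_modEq {m : ℕ} {F : ℤ → ℤ}
    (hF : ∀ X Y, (Int.gcd m (X - Y) : ℤ) ∣ F X - F Y) :
    ∃ G : ℤ → ℤ, (∀ X Y, X - Y ∣ G X - G Y) ∧ ∀ X, G X ≡ F X [ZMOD m] := by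
  obtain ⟨G, hG⟩ := exists_forall_rel_of_extend
    (fun X u Y v => X - Y ∣ u - v ∧ (m : ℤ) ∣ u - F X) fun s g t hg => by
      obtain ⟨z, hzF, hzg⟩ := Int.exists_extend_congruencePreserving hF s g
        (fun x hx => (hg x hx x hx).2) (fun x hx y hy => (hg x hx y hy).1) t
      refine ⟨z, ⟨by simp, hzF⟩, fun x hx => ⟨⟨?_, (hg x hx x hx).2⟩, hzg x hx, hzF⟩⟩
      rw [← neg_dvd, neg_sub, dvd_sub_comm]
      exact hzg x hx
  exact ⟨G, fun X Y => (hG X Y).1, fun X => (Int.modEq_iff_dvd.mpr (hG X X).2).symm⟩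

theorem ZMod.gcd_dvd_of_intCast_dvd {m : ℕ} {k a : ℤ} (h : (k : ZMod m) ∣ (a : ZMod m)) :
    (Int.gcd m k : ℤ) ∣ a := by
  obtain ⟨c, hc⟩ := h
  have hm : (m : ℤ) ∣ a - k * c.cast := by
    rw [← ZMod.intCast_zmod_eq_zero_iff_dvd]
    push_cast [ZMod.intCast_zmod_cast, hc]
    ring
  have := dvd_add ((Int.natCast_dvd_natCast.mpr (Nat.gcd_dvd_left _ _)).trans hm)
    ((Int.gcd_dvd_right (m : ℤ) k).mul_right c.cast)
  rwa [sub_add_cancel] at this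

theorem stmt_7 (m n s r : ℕ) (hmn : m ∣ n) (hms : m ∣ s) (hnr : n ∣ r) (hsr : s ∣ r)
    (f : ZMod n → ZMod m)
    (hf : ∀ x y : ZMod n, ZMod.castHom hmn (ZMod m) (x - y) ∣ f x - f y) :
    ∃ g : ZMod r → ZMod s,
      (∀ x y : ZMod r, ZMod.castHom hsr (ZMod s) (x - y) ∣ g x - g y) ∧
      ∀ x : ZMod r,
        ZMod.castHom hms (ZMod m) (g x) = f (ZMod.castHom hnr (ZMod n) x) := by
  let F : ℤ → ℤ := fun X => (f X).cast
  have hF : ∀ X Y, (Int.gcd m (X - Y) : ℤ) ∣ F X - F Y := fun X Y =>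
    ZMod.gcd_dvd_of_intCast_dvd <| by
      simpa only [Int.cast_sub, F, ZMod.intCast_zmod_cast, map_sub, map_intCast] using hf X Y
  obtain ⟨G, hGcp, hGF⟩ := Int.exists_congruencePreserving_modEq hF
  have hcast : ∀ {a b : ℕ} (h : b ∣ a) (x : ZMod a), ZMod.castHom h (ZMod b) x = (x.cast : ℤ) :=
    fun _ x => by rw [ZMod.castHom_apply, ZMod.intCast_cast]
  refine ⟨fun x => (G x.cast : ZMod s), fun x y => ?_, fun x => ?_⟩
  · rw [map_sub, hcast, hcast]
    simpa only [Int.cast_sub, eq_intCast] using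
      map_dvd (Int.castRingHom (ZMod s)) (hGcp x.cast y.cast)
  · rw [map_intCast, (ZMod.intCast_eq_intCast_iff _ _ m).mpr (hGF _), ZMod.intCast_zmod_cast,
      hcast]
end

section
/- Let Φ : ℤ_p → ℤ_p and for each n define φ_n : ℤ/p^nℤ → ℤ/p^nℤ by φ_n = π_n ∘ Φ ∘ ι_n, where π_n : ℤ_p → ℤ/p^nℤ is the projection and ι_n embeds ℤ/p^nℤ into ℤ_p as {0,...,p^n - 1}. Then Φ is congruence preserving if and only if Φ is 1-Lipschitz, every φ_n is congruence preserving, and Φ is the inverse limit of the φ_n (i.e. π_n ∘ Φ = φ_n ∘ π_n and π_{n,m} ∘ φ_n = φ_m ∘ π_{n,m} for m ≤ n). -/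
/-!
In `ℤ_[p]` divisibility is comparison of norms, so `x - y ∣ Φ x - Φ y` for all `x, y` says
exactly that `Φ` is 1-Lipschitz. Such a `Φ` preserves congruences modulo every `p ^ n`, hence
descends to `ZMod (p ^ n)`; the descended map is `φ n`, since `x` and its representative
`x.val` agree modulo `p ^ n`, and everything else follows by reducing modulo `p ^ n`.
-/

namespace PadicInt

variable {p : ℕ} [Fact p.Prime]

theorem dvd_iff_norm_le {a b : ℤ_[p]} : a ∣ b ↔ ‖b‖ ≤ ‖a‖ := by
  refine ⟨fun ⟨c, hc⟩ => ?_, fun h => ?_⟩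
  · rw [hc, norm_mul]
    exact mul_le_of_le_one_right (norm_nonneg a) c.norm_le_one
  · rcases eq_or_ne a 0 with rfl | ha
    · simp_all
    have ha' : (a : ℚ_[p]) ≠ 0 := fun h0 => ha (Subtype.ext h0)
    have hq : ‖(b : ℚ_[p]) / a‖ ≤ 1 := by
      rw [norm_div, padic_norm_e_of_padicInt, padic_norm_e_of_padicInt]
      exact div_le_one_of_le₀ h (norm_nonneg _)
    exact ⟨⟨_, hq⟩, Subtype.ext (mul_div_cancel₀ _ ha').symm⟩

theorem lipschitzWith_one_iff_forall_sub_dvd {Φ : ℤ_[p] → ℤ_[p]} :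
    LipschitzWith 1 Φ ↔ ∀ x y, x - y ∣ Φ x - Φ y := by
  simp only [dvd_iff_norm_le, ← dist_eq_norm, lipschitzWith_iff_dist_le_mul, NNReal.coe_one,
    one_mul]

theorem toZModPow_eq_iff_dvd_sub (n : ℕ) (a b : ℤ_[p]) :
    toZModPow n a = toZModPow n b ↔ (p : ℤ_[p]) ^ n ∣ a - b := by
  rw [← sub_eq_zero, ← map_sub, ← RingHom.mem_ker, ker_toZModPow, Ideal.mem_span_singleton]

theorem toZModPow_natCast_val (n : ℕ) (x : ZMod (p ^ n)) :
    toZModPow n (x.val : ℤ_[p]) = x := by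
  have : NeZero (p ^ n) := ⟨pow_ne_zero n (Fact.out : p.Prime).ne_zero⟩
  rw [map_natCast, ZMod.natCast_zmod_val]

theorem toZModPow_apply_eq_of_forall_sub_dvd {Φ : ℤ_[p] → ℤ_[p]}
    (hΦ : ∀ x y, x - y ∣ Φ x - Φ y) (n : ℕ) {x y : ℤ_[p]}
    (h : toZModPow n x = toZModPow n y) : toZModPow n (Φ x) = toZModPow n (Φ y) := by
  rw [toZModPow_eq_iff_dvd_sub] at h ⊢
  exact h.trans (hΦ x y)

end PadicInt

open PadicInt in
theorem stmt_10 (p : ℕ) [Fact p.Prime] (Φ : ℤ_[p] → ℤ_[p])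
    (φ : ∀ n : ℕ, ZMod (p ^ n) → ZMod (p ^ n))
    (hφ : ∀ (n : ℕ) (x : ZMod (p ^ n)),
      φ n x = PadicInt.toZModPow n (Φ ((x.val : ℤ_[p])))) :
    (∀ x y : ℤ_[p], x - y ∣ Φ x - Φ y) ↔
      (LipschitzWith 1 Φ ∧
       (∀ n : ℕ, ∀ x y : ZMod (p ^ n), x - y ∣ φ n x - φ n y) ∧
       (∀ (n : ℕ) (x : ℤ_[p]),
          PadicInt.toZModPow n (Φ x) = φ n (PadicInt.toZModPow n x)) ∧
       (∀ (m n : ℕ) (h : m ≤ n) (x : ZMod (p ^ n)),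
          ZMod.castHom (pow_dvd_pow p h) (ZMod (p ^ m)) (φ n x)
            = φ m (ZMod.castHom (pow_dvd_pow p h) (ZMod (p ^ m)) x))) := by
  refine ⟨fun hΦ => ?_, fun h => lipschitzWith_one_iff_forall_sub_dvd.mp h.1⟩
  have hproj (n : ℕ) (x : ℤ_[p]) : toZModPow n (Φ x) = φ n (toZModPow n x) := by
    rw [hφ, toZModPow_apply_eq_of_forall_sub_dvd hΦ n (toZModPow_natCast_val n _).symm]
  refine ⟨lipschitzWith_one_iff_forall_sub_dvd.mpr hΦ, fun n x y => ?_, hproj,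
    fun m n hmn x => ?_⟩
  · obtain ⟨c, hc⟩ := hΦ x.val y.val
    refine ⟨toZModPow n c, ?_⟩
    rw [hφ, hφ, ← map_sub, hc, map_mul, map_sub, toZModPow_natCast_val, toZModPow_natCast_val]
  · have hx : ZMod.castHom (pow_dvd_pow p hmn) (ZMod (p ^ m)) x = toZModPow m x.val := by
      rw [ZMod.castHom_apply, ← cast_toZModPow m n hmn, toZModPow_natCast_val]
    rw [hx, ← hproj, hφ, ZMod.castHom_apply, cast_toZModPow m n hmn]
end

section
/- If Φ : ℤ_p → ℤ_p is congruence preserving (as a lift of congruence preserving φ_n on each ℤ/p^nℤ compatible under projections), then for all x, y ∈ ℤ_p there exists z ∈ ℤ_p with Φ(x) - Φ(y) = (x - y)·z; moreover such z can be obtained via König's Lemma from the tree of compatible witnesses u_n ∈ ℤ/p^nℤ satisfying φ_n(π_n(x)) - φ_n(π_n(y)) = (π_n(x) - π_n(y))·u_n. -/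
/-! A congruence-preserving `φ_n` gives `π_n(x - y) ∣ π_n(Φ x - Φ y)` at every level `n`.
Writing `x - y = u pᵏ` with `u` a unit and `k` its valuation, the level `k` alone already
forces `pᵏ ∣ Φ x - Φ y`, so a quotient `z` exists in `ℤ_[p]` itself; its projections are then
automatically the witnesses `u_n` at every level, and no compactness argument is needed. -/

namespace PadicInt

variable {p : ℕ} [Fact p.Prime]

theorem dvd_iff_toZModPow_valuation_eq_zero {a : ℤ_[p]} (ha : a ≠ 0) (b : ℤ_[p]) :
    a ∣ b ↔ toZModPow a.valuation b = 0 := by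
  rw [← RingHom.mem_ker, ker_toZModPow, Ideal.mem_span_singleton]
  conv_lhs => rw [unitCoeff_spec ha]
  exact Units.mul_left_dvd

theorem dvd_of_forall_toZModPow_dvd {a b : ℤ_[p]} (h : ∀ n, toZModPow n a ∣ toZModPow n b) :
    a ∣ b := by
  by_cases ha : a = 0
  · obtain rfl : b = 0 :=
      ext_of_toZModPow.mp fun n => by simpa only [ha, map_zero, zero_dvd_iff] using h n
    exact dvd_zero a
  · have hak : toZModPow a.valuation a = 0 :=
      (dvd_iff_toZModPow_valuation_eq_zero ha a).mp dvd_rfl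
    rw [dvd_iff_toZModPow_valuation_eq_zero ha, ← zero_dvd_iff, ← hak]
    exact h _

end PadicInt

theorem stmt_11_general (p : ℕ) [Fact p.Prime] (Φ : ℤ_[p] → ℤ_[p])
    (φ : ∀ n : ℕ, ZMod (p ^ n) → ZMod (p ^ n))
    (hcp : ∀ n : ℕ, ∀ x y : ZMod (p ^ n), x - y ∣ φ n x - φ n y)
    (hlift : ∀ (n : ℕ) (x : ℤ_[p]),
        PadicInt.toZModPow n (Φ x) = φ n (PadicInt.toZModPow n x)) :
    ∀ x y : ℤ_[p], ∃ z : ℤ_[p], Φ x - Φ y = (x - y) * z ∧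
      ∀ n : ℕ,
        φ n (PadicInt.toZModPow n x) - φ n (PadicInt.toZModPow n y)
          = (PadicInt.toZModPow n x - PadicInt.toZModPow n y)
              * PadicInt.toZModPow n z := by
  intro x y
  obtain ⟨z, hz⟩ : x - y ∣ Φ x - Φ y :=
    PadicInt.dvd_of_forall_toZModPow_dvd fun n => by
      simpa only [map_sub, hlift] using hcp n _ _
  refine ⟨z, hz, fun n => ?_⟩
  simpa only [map_sub, map_mul, hlift] using congrArg (PadicInt.toZModPow n) hz

theorem stmt_11 (p : ℕ) [Fact p.Prime] (Φ : ℤ_[p] → ℤ_[p])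
    (φ : ∀ n : ℕ, ZMod (p ^ n) → ZMod (p ^ n))
    (hcp : ∀ n : ℕ, ∀ x y : ZMod (p ^ n), x - y ∣ φ n x - φ n y)
    (hcompat : ∀ (m n : ℕ) (h : m ≤ n) (x : ZMod (p ^ n)),
        ZMod.castHom (pow_dvd_pow p h) (ZMod (p ^ m)) (φ n x)
          = φ m (ZMod.castHom (pow_dvd_pow p h) (ZMod (p ^ m)) x))
    (hlift : ∀ (n : ℕ) (x : ℤ_[p]),
        PadicInt.toZModPow n (Φ x) = φ n (PadicInt.toZModPow n x)) :
    ∀ x y : ℤ_[p], ∃ z : ℤ_[p], Φ x - Φ y = (x - y) * z ∧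
      ∀ n : ℕ,
        φ n (PadicInt.toZModPow n x) - φ n (PadicInt.toZModPow n y)
          = (PadicInt.toZModPow n x - PadicInt.toZModPow n y)
              * PadicInt.toZModPow n z :=
  stmt_11_general p Φ φ hcp hlift
end

section
/- The function Φ : ℤ_p → ℤ_p defined by the Mahler series Σ_{k≥1} p^{ν_p(k)-1} C(x,k), where ν_p(k) is the largest i with p^i ≤ k, is uniformly continuous but not congruence preserving. -/
/-!
The coefficients `p ^ (ν_p(k) - 1)` tend to `0` in `ℤ_[p]`, so `Φ` is a Mahler series, hence
continuous, hence uniformly continuous on the compact space `ℤ_[p]`. At a natural number `n`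
the series is the finite sum `∑_{k ≤ n} a_k C(n, k)`, and `a_k = 1` for `1 ≤ k < p ^ 2`, so
`Φ p - Φ 0 = 2 ^ p - 1 ≡ 1 (mod p)` is not divisible by `p - 0`.
-/

open Filter Finset Topology PadicInt

theorem Nat.tendsto_log_atTop {b : ℕ} (hb : 1 < b) : Tendsto (Nat.log b) atTop atTop :=
  tendsto_atTop_atTop_of_monotone Nat.log_monotone fun n => ⟨b ^ n, (Nat.log_pow hb n).ge⟩

theorem tsum_mul_choose_natCast {R : Type*} [CommRing R] [BinomialRing R] [TopologicalSpace R]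
    (a : ℕ → R) (n : ℕ) :
    ∑' k, a k * Ring.choose (n : R) k = ∑ k ∈ range (n + 1), a k * n.choose k := by
  simp_rw [Ring.choose_natCast]
  apply tsum_eq_sum
  intro k hk
  rw [mem_range, not_lt] at hk
  rw [Nat.choose_eq_zero_of_lt hk, Nat.cast_zero, mul_zero]

namespace PadicInt

variable {p : ℕ} [Fact p.Prime]

theorem continuous_tsum_mul_choose {a : ℕ → ℤ_[p]} (ha : Tendsto a atTop (𝓝 0)) :
    Continuous fun x : ℤ_[p] => ∑' k, a k * Ring.choose x k := by
  refine (mahlerSeries (E := ℤ_[p]) a).continuous.congr fun x => ?_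
  simp only [mahlerSeries_apply ha, mahler_apply, smul_eq_mul, mul_comm]

variable (p) in
noncomputable def logCoeff (k : ℕ) : ℤ_[p] :=
  if 1 ≤ k then (p : ℤ_[p]) ^ (Nat.log p k - 1) else 0

theorem tendsto_logCoeff : Tendsto (logCoeff p) atTop (𝓝 0) := by
  have hp : 1 < p := (Fact.out : p.Prime).one_lt
  have hpow : Tendsto (fun n => (p : ℤ_[p]) ^ n) atTop (𝓝 0) := by
    refine tendsto_pow_atTop_nhds_zero_of_norm_lt_one ?_
    rw [norm_p]
    exact inv_lt_one_of_one_lt₀ (by exact_mod_cast hp)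
  refine (hpow.comp ((tendsto_sub_atTop_nat 1).comp (Nat.tendsto_log_atTop hp))).congr' ?_
  filter_upwards [eventually_ge_atTop 1] with k hk
  simp [logCoeff, hk]

theorem logCoeff_zero : logCoeff p 0 = 0 := rfl

theorem logCoeff_eq_one {k : ℕ} (hk₀ : 1 ≤ k) (hk : k < p ^ 2) : logCoeff p k = 1 := by
  have : Nat.log p k < 2 := Nat.log_lt_of_lt_pow (by omega) hk
  rw [logCoeff, if_pos hk₀, show Nat.log p k - 1 = 0 by omega, pow_zero]

theorem sum_logCoeff_mul_choose :
    ∑ k ∈ range (p + 1), logCoeff p k * p.choose k = 2 ^ p - 1 := by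
  have hp : 1 < p := (Fact.out : p.Prime).one_lt
  rw [sum_range_succ', logCoeff_zero, zero_mul, add_zero, eq_sub_iff_add_eq]
  have h2 : ∑ k ∈ range (p + 1), (p.choose k : ℤ_[p]) = 2 ^ p := by
    exact_mod_cast Nat.sum_range_choose p
  rw [sum_range_succ', Nat.choose_zero_right, Nat.cast_one] at h2
  rw [← h2]
  congr 1
  refine sum_congr rfl fun k hk => ?_
  rw [logCoeff_eq_one (by omega) (by rw [mem_range] at hk; nlinarith), one_mul]

variable (p) in
theorem not_natCast_dvd_two_pow_sub_one : ¬ (p : ℤ_[p]) ∣ 2 ^ p - 1 := by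
  intro h
  have := map_dvd toZMod h
  rw [map_natCast, ZMod.natCast_self, zero_dvd_iff, map_sub, map_pow, map_ofNat, map_one,
    ZMod.pow_card] at this
  norm_num at this

end PadicInt

theorem stmt_15 (p : ℕ) [Fact p.Prime] (Φ : ℤ_[p] → ℤ_[p])
    (hΦ : ∀ x : ℤ_[p],
      Φ x = ∑' k : ℕ,
        (if 1 ≤ k then (p : ℤ_[p]) ^ (Nat.log p k - 1) else 0) * Ring.choose x k) :
    UniformContinuous Φ ∧ ¬ ∀ x y : ℤ_[p], x - y ∣ Φ x - Φ y := by
  obtain rfl : Φ = fun x => ∑' k, logCoeff p k * Ring.choose x k := funext hΦ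
  refine ⟨CompactSpace.uniformContinuous_of_continuous
    (continuous_tsum_mul_choose tendsto_logCoeff), fun hcong => ?_⟩
  have hΦ₀ : ∑' k, logCoeff p k * Ring.choose (0 : ℤ_[p]) k = 0 := by
    simpa [logCoeff_zero] using tsum_mul_choose_natCast (logCoeff p) 0
  have hΦp : ∑' k, logCoeff p k * Ring.choose (p : ℤ_[p]) k = 2 ^ p - 1 := by
    rw [tsum_mul_choose_natCast, sum_logCoeff_mul_choose]
  apply not_natCast_dvd_two_pow_sub_one p
  simpa only [sub_zero, hΦ₀, hΦp] using hcong p 0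
end

section
/- Let f : ℤ → ℤ be a nondecreasing congruence preserving function. Then for any set L ⊆ ℤ, f⁻¹(L) = ⋃_{a ∈ f⁻¹(L)} ⋂_{t ∈ L - a} (L - t), where L - t = {x - t : x ∈ L}. -/
/-!
If `x` lies in the piece indexed by `a ∈ f⁻¹(L)`, then `L` is stable under translation by
`x - a`. Congruence preservation gives `f x = f a + c (x - a)` and monotonicity forces `c ≥ 0`,
so `f x` is reached from `f a ∈ L` by `c` such translations.
-/

theorem Set.MapsTo.add_nsmul_mem {M : Type*} [AddMonoid M] {L : Set M} {d : M}
    (h : Set.MapsTo (· + d) L L) {ℓ : M} (hℓ : ℓ ∈ L) (n : ℕ) : ℓ + n • d ∈ L :=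
  add_right_iterate_apply (n := n) d ℓ ▸ h.iterate n hℓ

theorem Monotone.exists_nat_mul_of_sub_dvd_sub {f : ℤ → ℤ} (hmono : Monotone f) {x a : ℤ}
    (hdvd : x - a ∣ f x - f a) : ∃ n : ℕ, f x = f a + n • (x - a) := by
  rcases eq_or_ne x a with rfl | hne
  · exact ⟨0, by simp⟩
  obtain ⟨c, hc⟩ := hdvd
  have hprod : 0 ≤ (x - a) * (f x - f a) := by
    rcases le_total a x with hax | hxa
    · exact mul_nonneg (sub_nonneg.2 hax) (sub_nonneg.2 (hmono hax))
    · exact mul_nonneg_of_nonpos_of_nonpos (sub_nonpos.2 hxa) (sub_nonpos.2 (hmono hxa))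
  have hsq : 0 < (x - a) * (x - a) := mul_self_pos.2 (sub_ne_zero.2 hne)
  have hc0 : 0 ≤ c := by
    rw [hc, ← mul_assoc] at hprod
    exact nonneg_of_mul_nonneg_right hprod hsq
  refine ⟨c.toNat, ?_⟩
  rw [nsmul_eq_mul, Int.toNat_of_nonneg hc0]
  linarith

theorem stmt_16 (f : ℤ → ℤ) (hmono : Monotone f)
    (hf : ∀ x y : ℤ, x - y ∣ f x - f y) (L : Set ℤ) :
    f ⁻¹' L = ⋃ a ∈ f ⁻¹' L, ⋂ t ∈ {t : ℤ | t + a ∈ L}, {x : ℤ | x + t ∈ L} := by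
  ext x
  simp only [Set.mem_preimage, Set.mem_iUnion, Set.mem_iInter, Set.mem_ofPred_eq]
  constructor
  · exact fun hx => ⟨x, hx, fun t ht => by rwa [add_comm]⟩
  · rintro ⟨a, ha, hx⟩
    have htrans : Set.MapsTo (· + (x - a)) L L := fun ℓ hℓ => by
      simpa [add_sub_left_comm] using hx (ℓ - a) (by simpa using hℓ)
    obtain ⟨n, hn⟩ := hmono.exists_nat_mul_of_sub_dvd_sub (hf x a)
    exact hn ▸ htrans.add_nsmul_mem ha n
end

section
/- Let f : ℤ → ℤ be a nondecreasing function. Then f is congruence preserving with f(a) ≥ a for all a ∈ ℤ if and only if for every finite subset L of ℤ, the smallest lattice of subsets of ℤ containing L and closed under decrement (L ↦ L - 1) is closed under f⁻¹. -/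
/-- A family of subsets of `ℤ` closed under binary unions, binary intersections,
and decrement `A ↦ A - 1 = {x | x + 1 ∈ A}`. -/
def IsDecLattice (C : Set (Set ℤ)) : Prop :=
  (∀ A ∈ C, ∀ B ∈ C, A ∪ B ∈ C) ∧ (∀ A ∈ C, ∀ B ∈ C, A ∩ B ∈ C) ∧
  (∀ A ∈ C, {x : ℤ | x + 1 ∈ A} ∈ C)

/-- The smallest lattice of subsets of `ℤ` containing `L` and closed under decrement. -/
def genLattice (L : Set ℤ) : Set (Set ℤ) :=
  {S | ∀ C : Set (Set ℤ), IsDecLattice C → L ∈ C → S ∈ C}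

/-!
(⇒) The sets `S` with `g ⁻¹' S ∈ genLattice L` for every monotone, congruence preserving
`g ≥ id` form a decrement-closed lattice, because `g ⁻¹' (S - 1) = (g + 1) ⁻¹' S`; so only
`S = L` needs work. Then `g ⁻¹' L` is finite and is the union, over its points `x`, of the finite
intersections `window L x = ⋂_{c ∈ L, c ≥ x} (L - (c - x))`. Such a window contains `x`; a point
`y` of it lies below `x` because `L` is bounded, and since `x - y ∣ g x - g y ≥ 0` the window
lets us walk down from `g x ∈ L` in steps of `x - y` to `g y`, staying in `L`.

(⇐) Membership in `genLattice L` is tested against decrement-closed lattices containing `L`: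
the subsets of `(-∞, b]` give `a ≤ f a`, and the sets closed under `z ↦ z - d` above a threshold
give `x - y ∣ f x - f y`.
-/

namespace IsDecLattice

variable {C : Set (Set ℤ)}

theorem union_mem (hC : IsDecLattice C) {A B : Set ℤ} (hA : A ∈ C) (hB : B ∈ C) :
    A ∪ B ∈ C :=
  hC.1 A hA B hB

theorem inter_mem (hC : IsDecLattice C) {A B : Set ℤ} (hA : A ∈ C) (hB : B ∈ C) :
    A ∩ B ∈ C :=
  hC.2.1 A hA B hB

theorem shift_mem (hC : IsDecLattice C) {A : Set ℤ} (hA : A ∈ C) {k : ℤ} (hk : 0 ≤ k) :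
    {x | x + k ∈ A} ∈ C := by
  induction k, hk using Int.leInduction with
  | base => simpa using hA
  | succ k _ ih =>
    simpa only [Set.mem_ofPred_eq, add_comm k 1, ← add_assoc] using hC.2.2 _ ih

theorem biUnion_mem (hC : IsDecLattice C) (hempty : ∅ ∈ C) {ι : Type*} (s : Finset ι)
    {A : ι → Set ℤ} (h : ∀ i ∈ s, A i ∈ C) : ⋃ i ∈ s, A i ∈ C := by
  rw [← Finset.sup_set_eq_biUnion]
  exact Finset.sup_induction hempty (fun _ hA _ hB => hC.union_mem hA hB) h

theorem biInter_mem (hC : IsDecLattice C) {ι : Type*} {s : Finset ι} (hs : s.Nonempty)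
    {A : ι → Set ℤ} (h : ∀ i ∈ s, A i ∈ C) : ⋂ i ∈ s, A i ∈ C := by
  rw [← Finset.inf_set_eq_iInter, ← Finset.inf'_eq_inf hs]
  exact Finset.inf'_induction hs _ (fun _ hA _ hB => hC.inter_mem hA hB) h

end IsDecLattice

theorem isDecLattice_genLattice (L : Set ℤ) : IsDecLattice (genLattice L) :=
  ⟨fun _ hA _ hB C hC hL => hC.union_mem (hA C hC hL) (hB C hC hL),
    fun _ hA _ hB C hC hL => hC.inter_mem (hA C hC hL) (hB C hC hL),
    fun _ hA C hC hL => hC.2.2 _ (hA C hC hL)⟩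

theorem genLattice_subset {C : Set (Set ℤ)} (hC : IsDecLattice C) {L : Set ℤ} (hL : L ∈ C) :
    genLattice L ⊆ C :=
  fun _ hS => hS C hC hL

theorem self_mem_genLattice (L : Set ℤ) : L ∈ genLattice L :=
  fun _ _ hL => hL

theorem shift_mem_genLattice (L : Set ℤ) {k : ℤ} (hk : 0 ≤ k) : {x | x + k ∈ L} ∈ genLattice L :=
  (isDecLattice_genLattice L).shift_mem (self_mem_genLattice L) hk

-- A finite set translated past its own diameter is disjoint from itself.
theorem empty_mem_genLattice {L : Set ℤ} (hL : L.Finite) : ∅ ∈ genLattice L := by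
  obtain ⟨M, hM⟩ := hL.bddAbove
  obtain ⟨m, hm⟩ := hL.bddBelow
  have hdisj : L ∩ {x | x + (|M - m| + 1) ∈ L} = ∅ := by
    refine Set.eq_empty_of_forall_notMem fun x ⟨hx, hxk⟩ => ?_
    have := hm hx
    have := hM hxk
    have := le_abs_self (M - m)
    omega
  rw [← hdisj]
  exact (isDecLattice_genLattice L).inter_mem (self_mem_genLattice L)
    (shift_mem_genLattice L (by positivity))

def window (L : Set ℤ) (x : ℤ) : Set ℤ :=
  {y | ∀ c ∈ L, x ≤ c → y + (c - x) ∈ L}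

theorem self_mem_window (L : Set ℤ) (x : ℤ) : x ∈ window L x := by
  intro c hc _
  simpa using hc

theorem window_mem_genLattice {L : Set ℤ} (hL : L.Finite) {x : ℤ}
    (hx : (L ∩ Set.Ici x).Nonempty) : window L x ∈ genLattice L := by
  let s := (hL.inter_of_left (Set.Ici x)).toFinset
  have hs : s.Nonempty := by simpa [s] using hx
  have hwindow : window L x = ⋂ c ∈ s, {y | y + (c - x) ∈ L} := by
    ext y
    simp [window, s]
  rw [hwindow]
  refine (isDecLattice_genLattice L).biInter_mem hs fun c hc => shift_mem_genLattice L ?_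
  simp only [s, Set.Finite.mem_toFinset, Set.mem_inter_iff, Set.mem_Ici] at hc
  omega

theorem le_of_mem_window {L : Set ℤ} (hL : L.Finite) {x y : ℤ}
    (hx : (L ∩ Set.Ici x).Nonempty) (hy : y ∈ window L x) : y ≤ x := by
  obtain ⟨c, ⟨hcL, hxc : x ≤ c⟩, hmax⟩ :=
    (L ∩ Set.Ici x).exists_max_image id (hL.inter_of_left _) hx
  by_contra! hxy
  have hle : y + (c - x) ≤ c := hmax _ ⟨hy c hcL hxc, show x ≤ y + (c - x) by omega⟩
  omega

theorem sub_mul_mem_of_mem_window {L : Set ℤ} {x y c : ℤ} (hy : y ∈ window L x) (hyx : y ≤ x)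
    (hc : c ∈ L) (k : ℕ) (hk : y ≤ c - k * (x - y)) : c - k * (x - y) ∈ L := by
  induction k with
  | zero => simpa using hc
  | succ k ih =>
    push_cast at hk ⊢
    have hmem := hy _ (ih (by nlinarith)) (by nlinarith)
    convert hmem using 1
    ring

theorem finite_preimage_singleton {g : ℤ → ℤ} (hcp : ∀ x y : ℤ, x - y ∣ g x - g y)
    (hge : ∀ a, a ≤ g a) (b : ℤ) : (g ⁻¹' {b}).Finite := by
  refine (Set.finite_Icc (2 * b + 1 - g (b + 1)) b).subset fun x (hx : g x = b) => ?_
  have hpos : 0 < g (b + 1) - g x := by linarith [hge (b + 1)]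
  have := Int.le_of_dvd hpos (hcp (b + 1) x)
  constructor <;> linarith [hge x]

theorem window_subset_preimage {L : Set ℤ} (hL : L.Finite) {g : ℤ → ℤ} (hmono : Monotone g)
    (hcp : ∀ x y : ℤ, x - y ∣ g x - g y) (hge : ∀ a, a ≤ g a) {x : ℤ} (hx : g x ∈ L) :
    window L x ⊆ g ⁻¹' L := by
  intro y hy
  have hyx := le_of_mem_window hL ⟨g x, hx, hge x⟩ hy
  rcases hyx.eq_or_lt with rfl | hlt
  · exact hx
  obtain ⟨t, ht⟩ := hcp x y
  have ht0 : 0 ≤ t := nonneg_of_mul_nonneg_right (ht ▸ sub_nonneg.2 (hmono hyx)) (by omega)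
  lift t to ℕ using ht0
  have hgy : g y = g x - t * (x - y) := by linarith
  show g y ∈ L
  rw [hgy]
  exact sub_mul_mem_of_mem_window hy hyx hx t (hgy ▸ hge y)

theorem preimage_mem_genLattice {L : Set ℤ} (hL : L.Finite) {g : ℤ → ℤ} (hmono : Monotone g)
    (hcp : ∀ x y : ℤ, x - y ∣ g x - g y) (hge : ∀ a, a ≤ g a) : g ⁻¹' L ∈ genLattice L := by
  have hfin : (g ⁻¹' L).Finite := hL.preimage' fun b _ => finite_preimage_singleton hcp hge b
  have hunion : g ⁻¹' L = ⋃ x ∈ hfin.toFinset, window L x := by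
    refine subset_antisymm (fun x hx => ?_) ?_
    · exact Set.mem_biUnion (hfin.mem_toFinset.2 hx) (self_mem_window L x)
    · refine Set.iUnion₂_subset fun x hx => ?_
      exact window_subset_preimage hL hmono hcp hge (hfin.mem_toFinset.1 hx)
  rw [hunion]
  refine (isDecLattice_genLattice L).biUnion_mem (empty_mem_genLattice hL) _ fun x hx => ?_
  exact window_mem_genLattice hL ⟨g x, hfin.mem_toFinset.1 hx, hge x⟩

theorem preimage_mem_genLattice_of_mem {L : Set ℤ} (hL : L.Finite) {g : ℤ → ℤ}
    (hmono : Monotone g) (hcp : ∀ x y : ℤ, x - y ∣ g x - g y) (hge : ∀ a, a ≤ g a) {S : Set ℤ}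
    (hS : S ∈ genLattice L) : g ⁻¹' S ∈ genLattice L := by
  let C : Set (Set ℤ) := {S | ∀ g : ℤ → ℤ, Monotone g → (∀ x y : ℤ, x - y ∣ g x - g y) →
    (∀ a, a ≤ g a) → g ⁻¹' S ∈ genLattice L}
  have hC : IsDecLattice C := by
    refine ⟨fun A hA B hB g h₁ h₂ h₃ => ?_, fun A hA B hB g h₁ h₂ h₃ => ?_,
      fun A hA g h₁ h₂ h₃ => ?_⟩
    · exact (isDecLattice_genLattice L).union_mem (hA g h₁ h₂ h₃) (hB g h₁ h₂ h₃)
    · exact (isDecLattice_genLattice L).inter_mem (hA g h₁ h₂ h₃) (hB g h₁ h₂ h₃)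
    · refine hA (g · + 1) (fun a b hab => by simpa using h₁ hab) (fun x y => ?_)
        (fun a => by linarith [h₃ a])
      simpa using h₂ x y
  exact genLattice_subset hC (fun _ => preimage_mem_genLattice hL) hS g hmono hcp hge

theorem isDecLattice_powerset_Iic (b : ℤ) : IsDecLattice (𝒫 Set.Iic b) :=
  ⟨fun _ hA _ hB => Set.union_subset hA hB, fun _ hA _ _ => Set.inter_subset_left.trans hA,
    fun _ hA z hz => show z ≤ b by linarith [show z + 1 ≤ b from hA hz]⟩

theorem isDecLattice_stepDownClosed (m d : ℤ) :
    IsDecLattice {S | ∀ z ∈ S, m ≤ z → z - d ∈ S} := by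
  refine ⟨?_, ?_, ?_⟩
  · rintro A hA B hB z (hz | hz) hmz
    exacts [Or.inl (hA z hz hmz), Or.inr (hB z hz hmz)]
  · rintro A hA B hB z ⟨hzA, hzB⟩ hmz
    exact ⟨hA z hzA hmz, hB z hzB hmz⟩
  · intro A hA z hz hmz
    simpa only [Set.mem_ofPred_eq, sub_add_eq_add_sub] using hA (z + 1) hz (by omega)

theorem le_apply_of_preimage_mem_genLattice {f : ℤ → ℤ}
    (H : ∀ L : Set ℤ, L.Finite → f ⁻¹' L ∈ genLattice L) (a : ℤ) : a ≤ f a := by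
  have hsub := genLattice_subset (isDecLattice_powerset_Iic (f a))
    (Set.singleton_subset_iff.2 (Set.mem_Iic.2 le_rfl)) (H {f a} (Set.finite_singleton _))
  exact hsub rfl

-- `L = {z ∈ [y, f x] | z ≡ f x mod (x - y)}` is closed under `z ↦ z - (x - y)` on `[x, ∞)`,
-- hence so is `f ⁻¹' L`, which contains `x`.
theorem sub_dvd_of_preimage_mem_genLattice {f : ℤ → ℤ}
    (H : ∀ L : Set ℤ, L.Finite → f ⁻¹' L ∈ genLattice L) (x y : ℤ) : x - y ∣ f x - f y := by
  wlog hyx : y ≤ x generalizing x y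
  · rw [← neg_sub y x, neg_dvd, dvd_sub_comm]
    exact this y x (by omega)
  let L : Set ℤ := {z | y ≤ z ∧ z ≤ f x ∧ x - y ∣ f x - z}
  have hL : L.Finite := (Set.finite_Icc y (f x)).subset fun z hz => ⟨hz.1, hz.2.1⟩
  have hstep : L ∈ {S | ∀ z ∈ S, x ≤ z → z - (x - y) ∈ S} := by
    rintro z ⟨-, hzfx, hdvd⟩ hxz
    refine ⟨by omega, by omega, ?_⟩
    rw [sub_sub_eq_add_sub, add_sub_right_comm]
    exact dvd_add hdvd dvd_rfl
  have hpre := genLattice_subset (isDecLattice_stepDownClosed x (x - y)) hstep (H L hL)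
  have hxL : f x ∈ L := ⟨hyx.trans (le_apply_of_preimage_mem_genLattice H x), le_rfl, by simp⟩
  have hyL : f (x - (x - y)) ∈ L := hpre x hxL le_rfl
  rw [sub_sub_cancel] at hyL
  exact hyL.2.2

theorem stmt_17 (f : ℤ → ℤ) (hmono : Monotone f) :
    ((∀ x y : ℤ, x - y ∣ f x - f y) ∧ ∀ a : ℤ, a ≤ f a) ↔
    ∀ L : Set ℤ, L.Finite → ∀ S ∈ genLattice L, f ⁻¹' S ∈ genLattice L := by
  constructor
  · rintro ⟨hcp, hge⟩ L hL S hS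
    exact preimage_mem_genLattice_of_mem hL hmono hcp hge hS
  · intro H
    have H' : ∀ L : Set ℤ, L.Finite → f ⁻¹' L ∈ genLattice L :=
      fun L hL => H L hL L (self_mem_genLattice L)
    exact ⟨sub_dvd_of_preimage_mem_genLattice H', le_apply_of_preimage_mem_genLattice H'⟩
end

section
/- If f : ℤ → ℤ is a nondecreasing congruence preserving function with f(a) ≥ a for all a, and L = F + dℤ is a recognizable subset of ℤ (d ≥ 1, F ⊆ {0,...,d-1}), then f⁻¹(L) is a finite union of finite intersections of sets of the form L - t with t ∈ ℤ. -/
/-!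
Membership in `L` depends only on the residue mod `d`, hence so does membership in `f⁻¹(L)`:
the residue `s` of `x` satisfies `f s ≡ f x`. For each such `s`, the set of `x` with
`s + t ∈ L → x + t ∈ L` for the residues `t` is an intersection of translates of `L`, and it
contains `x ≡ s`. Conversely, such an `x` satisfies `L + (x - s) ⊆ L`. Iterating, and using that
`k (x - s) ≡ (k mod d) (x - s)`, gives `L + k (x - s) ⊆ L` for every integer `k`; and
`f x = f s + k (x - s)` for some `k` by congruence preservation.
-/

open Finset Classical

theorem mem_of_modEq_of_mem {F : Finset ℤ} {d : ℕ} {L : Set ℤ}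
    (hL : L = {x : ℤ | ∃ r ∈ F, ∃ q : ℤ, x = r + d * q}) {a b : ℤ}
    (hab : a ≡ b [ZMOD d]) (ha : a ∈ L) : b ∈ L := by
  subst hL
  obtain ⟨r, hr, q, rfl⟩ := ha
  obtain ⟨m, hm⟩ := hab.dvd
  exact ⟨r, hr, q + m, by linear_combination hm⟩

section ResidueClasses

variable {L : Set ℤ} {d : ℤ}

theorem Int.emod_mem_Ico (hd : 0 < d) (x : ℤ) : x % d ∈ Ico 0 d :=
  mem_Ico.mpr ⟨Int.emod_nonneg x hd.ne', Int.emod_lt_of_pos x hd⟩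

theorem add_mul_mem_of_add_mem (hd : d ≠ 0)
    (hL : ∀ a b, a ≡ b [ZMOD d] → a ∈ L → b ∈ L)
    {e : ℤ} (he : ∀ a ∈ L, a + e ∈ L) (k : ℤ) {a : ℤ} (ha : a ∈ L) :
    a + k * e ∈ L := by
  have hnat : ∀ n : ℕ, a + n * e ∈ L := by
    intro n
    induction n with
    | zero => simpa using ha
    | succ n ih => simpa [add_mul, add_assoc] using he _ ih
  refine hL _ _ ?_ (hnat (k % d).toNat)
  rw [Int.toNat_of_nonneg (Int.emod_nonneg k hd)]
  exact ((Int.mod_modEq k d).mul_right e).add_left a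

theorem apply_mem_of_forall_add_sub_mem {f : ℤ → ℤ} (hcp : ∀ x y : ℤ, x - y ∣ f x - f y)
    (hd : d ≠ 0) (hL : ∀ a b, a ≡ b [ZMOD d] → a ∈ L → b ∈ L) {s x : ℤ}
    (hs : f s ∈ L) (hsx : ∀ a ∈ L, a + (x - s) ∈ L) : f x ∈ L := by
  obtain ⟨k, hk⟩ := hcp x s
  have := add_mul_mem_of_add_mem hd hL hsx k hs
  rwa [mul_comm, ← hk, add_sub_cancel] at this

theorem apply_emod_modEq {f : ℤ → ℤ} (hcp : ∀ x y : ℤ, x - y ∣ f x - f y) (x : ℤ) :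
    f (x % d) ≡ f x [ZMOD d] :=
  Int.modEq_iff_dvd.mpr ((Int.modEq_iff_dvd.mp (Int.mod_modEq x d)).trans (hcp x (x % d)))

noncomputable def residuePattern (L : Set ℤ) (d s : ℤ) : Finset ℤ :=
  (Ico 0 d).filter (fun t => s + t ∈ L)

theorem residuePattern_nonempty (hd : 0 < d)
    (hL : ∀ a b, a ≡ b [ZMOD d] → a ∈ L → b ∈ L) {y : ℤ} (hy : y ∈ L) (s : ℤ) :
    (residuePattern L d s).Nonempty := by
  refine ⟨(y - s) % d, mem_filter.mpr ⟨Int.emod_mem_Ico hd _, hL y _ ?_ hy⟩⟩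
  simpa using ((Int.mod_modEq (y - s) d).add_left s).symm

theorem mem_iInter_residuePattern_iff (hd : 0 < d)
    (hL : ∀ a b, a ≡ b [ZMOD d] → a ∈ L → b ∈ L) {s x : ℤ} :
    x ∈ ⋂ t ∈ residuePattern L d s, {y : ℤ | y + t ∈ L} ↔
      ∀ t, s + t ∈ L → x + t ∈ L := by
  simp only [residuePattern, Set.mem_iInter, Set.mem_ofPred_eq, mem_filter, and_imp]
  refine ⟨fun h t ht => ?_, fun h t _ => h t⟩
  have hmod : ∀ z, z + t % d ≡ z + t [ZMOD d] := fun z => (Int.mod_modEq t d).add_left z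
  exact hL _ _ (hmod x) (h _ (Int.emod_mem_Ico hd t) (hL _ _ (hmod s).symm ht))

theorem preimage_eq_iUnion_iInter {f : ℤ → ℤ} (hcp : ∀ x y : ℤ, x - y ∣ f x - f y)
    (hd : 0 < d) (hL : ∀ a b, a ≡ b [ZMOD d] → a ∈ L → b ∈ L) :
    f ⁻¹' L = ⋃ s ∈ (Ico 0 d).filter (f · ∈ L),
      ⋂ t ∈ residuePattern L d s, {y : ℤ | y + t ∈ L} := by
  ext x
  simp only [Set.mem_preimage, Set.mem_iUnion, mem_filter, exists_prop,
    mem_iInter_residuePattern_iff hd hL]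
  constructor
  · intro hx
    refine ⟨x % d, ⟨Int.emod_mem_Ico hd x, hL _ _ (apply_emod_modEq hcp x).symm hx⟩,
      fun t ht => hL _ _ ?_ ht⟩
    exact (Int.mod_modEq x d).add_right t
  · rintro ⟨s, ⟨-, hs⟩, hsx⟩
    refine apply_mem_of_forall_add_sub_mem hcp hd.ne' hL hs fun a ha => ?_
    simpa [add_comm, add_sub_assoc'] using hsx (a - s) (by simpa using ha)

end ResidueClasses

theorem stmt_18_general (f : ℤ → ℤ)
    (hcp : ∀ x y : ℤ, x - y ∣ f x - f y)
    (d : ℕ) (hd : 1 ≤ d) (F : Finset ℤ)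
    (L : Set ℤ) (hL : L = {x : ℤ | ∃ r ∈ F, ∃ q : ℤ, x = r + d * q}) :
    ∃ J : Finset (Finset ℤ), (∀ I ∈ J, I.Nonempty) ∧
      f ⁻¹' L = ⋃ I ∈ J, ⋂ t ∈ I, {x : ℤ | x + t ∈ L} := by
  have hd : (0 : ℤ) < d := by exact_mod_cast hd
  have hLmod : ∀ a b, a ≡ b [ZMOD d] → a ∈ L → b ∈ L :=
    fun _ _ => mem_of_modEq_of_mem hL
  refine ⟨((Ico 0 (d : ℤ)).filter (f · ∈ L)).image (residuePattern L d), ?_, ?_⟩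
  · simp only [mem_image, mem_filter, forall_exists_index, and_imp]
    rintro _ s - hs rfl
    exact residuePattern_nonempty hd hLmod hs s
  · rw [preimage_eq_iUnion_iInter hcp hd hLmod, Finset.set_biUnion_finset_image]

theorem stmt_18 (f : ℤ → ℤ) (hmono : Monotone f)
    (hcp : ∀ x y : ℤ, x - y ∣ f x - f y) (hge : ∀ a : ℤ, a ≤ f a)
    (d : ℕ) (hd : 1 ≤ d) (F : Finset ℤ) (hF : ∀ r ∈ F, 0 ≤ r ∧ r < d)
    (L : Set ℤ) (hL : L = {x : ℤ | ∃ r ∈ F, ∃ q : ℤ, x = r + d * q}) :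
    ∃ J : Finset (Finset ℤ), (∀ I ∈ J, I.Nonempty) ∧
      f ⁻¹' L = ⋃ I ∈ J, ⋂ t ∈ I, {x : ℤ | x + t ∈ L} :=
  stmt_18_general f hcp d hd F L hL
end

section
/- Let L = 6 + 10ℕ ⊆ ℤ and f(x) = x². Then f is congruence preserving, but f⁻¹(L) = ({4,6} + 10ℕ) ∪ (−({4,6} + 10ℕ)) is not a finite union of finite intersections of sets L - t (t ∈ ℤ), since f⁻¹(L) contains infinitely many negative integers while each L - t contains only finitely many. -/
/-!
Squaring preserves congruences because `x - y ∣ x ^ 2 - y ^ 2`. A square is `6 mod 10` exactly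
when its root is `4` or `6 mod 10`, so `f⁻¹(L)` contains all `-(4 + 10 n)` and is unbounded below.
Each translate `L - t` is bounded below, hence so is every finite union of nonempty finite
intersections of translates.
-/

theorem exists_nat_eq_add_mul_iff {a m x : ℤ} (ha : 0 ≤ a) (ham : a < m) :
    (∃ n : ℕ, x = a + m * n) ↔ 0 ≤ x ∧ x % m = a := by
  have hm : 0 < m := ha.trans_lt ham
  constructor
  · rintro ⟨n, rfl⟩
    exact ⟨by positivity, by rw [Int.add_mul_emod_self_left, Int.emod_eq_of_lt ha ham]⟩
  · rintro ⟨hx, hxa⟩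
    refine ⟨(x / m).toNat, ?_⟩
    rw [Int.toNat_of_nonneg (Int.ediv_nonneg hx hm.le), ← hxa, Int.emod_add_mul_ediv]

theorem exists_nat_eq_neg_add_mul_iff {a m x : ℤ} (ha : 0 ≤ a) (ham : a < m) :
    (∃ n : ℕ, x = -(a + m * n)) ↔ x ≤ 0 ∧ (-x) % m = a := by
  simp only [← neg_eq_iff_eq_neg, exists_nat_eq_add_mul_iff ha ham, Left.nonneg_neg_iff]

theorem sq_emod_ten_eq_six_iff (x : ℤ) : x ^ 2 % 10 = 6 ↔ x % 10 = 4 ∨ x % 10 = 6 := by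
  have hr0 : 0 ≤ x % 10 := Int.emod_nonneg x (by norm_num)
  have hr10 : x % 10 < 10 := Int.emod_lt_of_pos x (by norm_num)
  rw [pow_two, Int.mul_emod]
  generalize x % 10 = r at hr0 hr10 ⊢
  interval_cases r <;> decide

theorem preimage_sq_six_add_ten_nat :
    (fun x : ℤ => x ^ 2) ⁻¹' {x : ℤ | ∃ n : ℕ, x = 6 + 10 * (n : ℤ)} =
      ({x : ℤ | ∃ n : ℕ, x = 4 + 10 * (n : ℤ)} ∪ {x : ℤ | ∃ n : ℕ, x = 6 + 10 * (n : ℤ)}) ∪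
      ({x : ℤ | ∃ n : ℕ, x = -(4 + 10 * (n : ℤ))} ∪
        {x : ℤ | ∃ n : ℕ, x = -(6 + 10 * (n : ℤ))}) := by
  ext x
  simp (disch := norm_num) only [Set.mem_preimage, Set.mem_union, Set.mem_ofPred_eq,
    exists_nat_eq_add_mul_iff, exists_nat_eq_neg_add_mul_iff, sq_nonneg, true_and,
    sq_emod_ten_eq_six_iff]
  omega

section Translates

variable {α : Type*} [AddCommGroup α] [LinearOrder α] [IsOrderedAddMonoid α]

theorem BddBelow.setOf_add_mem {L : Set α} (hL : BddBelow L) (t : α) :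
    BddBelow {x | x + t ∈ L} := by
  obtain ⟨b, hb⟩ := hL
  exact ⟨b - t, fun x hx => sub_le_iff_le_add.mpr (hb hx)⟩

theorem BddBelow.biUnion_biInter_setOf_add_mem {L : Set α} (hL : BddBelow L)
    (J : Finset (Finset α)) (hJ : ∀ I ∈ J, I.Nonempty) :
    BddBelow (⋃ I ∈ J, ⋂ t ∈ I, {x | x + t ∈ L}) := by
  refine (J.finite_toSet.bddBelow_biUnion).mpr fun I hI => ?_
  obtain ⟨t, ht⟩ := hJ I hI
  exact (hL.setOf_add_mem t).mono (Set.biInter_subset_of_mem ht)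

end Translates

theorem stmt_19 (f : ℤ → ℤ) (hf : f = fun x => x ^ 2)
    (L : Set ℤ) (hL : L = {x : ℤ | ∃ n : ℕ, x = 6 + 10 * (n : ℤ)}) :
    (∀ x y : ℤ, x - y ∣ f x - f y) ∧
    f ⁻¹' L = ({x : ℤ | ∃ n : ℕ, x = 4 + 10 * (n : ℤ)} ∪
               {x : ℤ | ∃ n : ℕ, x = 6 + 10 * (n : ℤ)}) ∪
              ({x : ℤ | ∃ n : ℕ, x = -(4 + 10 * (n : ℤ))} ∪
               {x : ℤ | ∃ n : ℕ, x = -(6 + 10 * (n : ℤ))}) ∧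
    ¬ ∃ J : Finset (Finset ℤ), (∀ I ∈ J, I.Nonempty) ∧
        f ⁻¹' L = ⋃ I ∈ J, ⋂ t ∈ I, {x : ℤ | x + t ∈ L} := by
  subst hf hL
  refine ⟨fun x y => sub_dvd_pow_sub_pow x y 2, preimage_sq_six_add_ten_nat, ?_⟩
  rintro ⟨J, hJ, hpre⟩
  have hL_bdd : BddBelow {x : ℤ | ∃ n : ℕ, x = 6 + 10 * (n : ℤ)} :=
    ⟨0, by rintro _ ⟨n, rfl⟩; omega⟩
  have hunbdd : ¬ BddBelow ((fun x : ℤ => x ^ 2) ⁻¹' {x : ℤ | ∃ n : ℕ, x = 6 + 10 * (n : ℤ)}) := by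
    refine not_bddBelow_iff.mpr fun b => ⟨-(4 + 10 * (b.natAbs : ℤ)), ?_, by omega⟩
    rw [preimage_sq_six_add_ten_nat]
    exact Or.inr (Or.inl ⟨b.natAbs, rfl⟩)
  exact hunbdd (hpre ▸ hL_bdd.biUnion_biInter_setOf_add_mem J hJ)
end
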